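/- Let (X,T) be a minimal distal system and d ≥ 1. If x, y ∈ Q^[d+1](X) agree in all coordinates ε ≠ ∅, then (x_∅, y_∅) ∈ RP^[d](X). -/

import Mathlib

open Filter Topology

noncomputable section

def dotP {d : ℕ} (n : Fin d → ℤ) (ε : Fin d → Bool) : ℤ :=
  ∑ i, if ε i then n i else 0

def vertex0 (d : ℕ) : Fin d → Bool := fun _ => false

def cubeQ (X : Type*) [TopologicalSpace X] (T : X ≃ₜ X) (d : ℕ) :
    Set ((Fin d → Bool) → X) :=
  closure {y | ∃ (x : X) (n : Fin d → ℤ), y = fun ε => (T.toEquiv ^ dotP n ε) x}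

/-- The regionally proximal relation of order `d`. -/
def RP (X : Type*) [MetricSpace X] (T : X ≃ₜ X) (d : ℕ) : Set (X × X) :=
  {p | ∀ δ > 0, ∃ (x' y' : X) (n : Fin d → ℤ),
    dist p.1 x' < δ ∧ dist p.2 y' < δ ∧
    ∀ ε : Fin d → Bool, ε ≠ vertex0 d →
      dist ((T.toEquiv ^ dotP n ε) x') ((T.toEquiv ^ dotP n ε) y') < δ}

/-- The point of `X^{2^{d+1}}` with value `a` at the vertex `∅` and given by `b`
elsewhere. -/
def set0 {X : Type*} {d : ℕ} (a : X) (b : (Fin d → Bool) → X) : (Fin d → Bool) → X :=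
  fun ε => if ε = vertex0 d then a else b ε

/-!
Write `u = (a, w)` and `v = (b, w)` as pairs of faces along the last coordinate. Let `G` be the
group generated by the face transformations and the diagonal transformation of `X^{2^k}`, and
`E = closure G` its enveloping semigroup. Every `p ∈ E` acts coordinatewise, and in a distal
system it is injective, so `E` is a group by Ellis' idempotent theorem; by minimality every
point of `Q^[k]` is `p (x₀, …, x₀)` for some `p ∈ E`. Embedding `v` and `u` into `Q^[d+2]` along
two transverse directions, transporting with `p` and `p⁻¹` and restricting to the diagonal of
these two directions yields `(a, b) ∈ Q^[d+1]`. Since `a` and `b` agree off `∅`, approximating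
`(a, b)` by parallelepipeds shows `(a ∅, b ∅) ∈ RP^[d]`.
-/

open Set Function

theorem Equiv.Perm.zpow_add_apply {α : Type*} (e : Equiv.Perm α) (a b : ℤ) (x : α) :
    (e ^ (a + b)) x = (e ^ a) ((e ^ b) x) := by
  rw [zpow_add, Equiv.Perm.mul_apply]

theorem Homeomorph.continuous_toEquiv_zpow {X : Type*} [TopologicalSpace X] (T : X ≃ₜ X)
    (n : ℤ) : Continuous (T.toEquiv ^ n) := by
  let toPerm : (X ≃ₜ X) →* Equiv.Perm X := ⟨⟨Homeomorph.toEquiv, rfl⟩, fun _ _ => rfl⟩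
  rw [← show toPerm (T ^ n) = T.toEquiv ^ n from map_zpow toPerm T n]
  exact (T ^ n).continuous

abbrev Cube (X : Type*) (k : ℕ) := (Fin k → Bool) → X

section dotP

variable {k : ℕ}

theorem dotP_add (n n' : Fin k → ℤ) (ε : Fin k → Bool) :
    dotP (n + n') ε = dotP n ε + dotP n' ε := by
  simp only [dotP, Pi.add_apply, ← Finset.sum_add_distrib]
  congr 1; ext i; split <;> simp

theorem dotP_eq_init (n : Fin (k + 1) → ℤ) (ε : Fin (k + 1) → Bool) :
    dotP n ε = dotP (Fin.init n) (Fin.init ε) + if ε (Fin.last k) then n (Fin.last k) else 0 :=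
  Fin.sum_univ_castSucc _

theorem dotP_snoc (n : Fin (k + 1) → ℤ) (ε : Fin k → Bool) (c : Bool) :
    dotP n (Fin.snoc ε c) = dotP (Fin.init n) ε + if c then n (Fin.last k) else 0 := by
  simp [dotP_eq_init n]

theorem dotP_snoc_left (n : Fin k → ℤ) (a : ℤ) (ε : Fin (k + 1) → Bool) :
    dotP (Fin.snoc n a) ε = dotP n (Fin.init ε) + if ε (Fin.last k) then a else 0 := by
  simp [dotP_eq_init _ ε]

@[simp]
theorem dotP_vertex0 (n : Fin k → ℤ) : dotP n (vertex0 k) = 0 := by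
  simp [dotP, vertex0]

theorem snoc_eq_vertex0_iff (ε : Fin k → Bool) (c : Bool) :
    (Fin.snoc ε c : Fin (k + 1) → Bool) = vertex0 (k + 1) ↔ ε = vertex0 k ∧ c = false := by
  rw [show vertex0 (k + 1) = Fin.snoc (vertex0 k) false from (Fin.snoc_init_self _).symm,
    Fin.snoc_inj]

end dotP

section Reindexing

variable {A B k : ℕ}

def IsCubeAffine (φ : (Fin A → Bool) → (Fin B → Bool)) : Prop :=
  ∀ n : Fin B → ℤ, ∃ (n' : Fin A → ℤ) (a : ℤ), ∀ ε, dotP n (φ ε) = dotP n' ε + a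

theorem isCubeAffine_init : IsCubeAffine fun ε : Fin (k + 1) → Bool => Fin.init ε :=
  fun n => ⟨Fin.snoc n 0, 0, fun ε => by simp [dotP_snoc_left]⟩

theorem isCubeAffine_snoc (c : Bool) : IsCubeAffine fun ε : Fin k → Bool => Fin.snoc ε c :=
  fun n => ⟨Fin.init n, if c then n (Fin.last k) else 0, fun ε => dotP_snoc n ε c⟩

theorem isCubeAffine_snoc_self_last :
    IsCubeAffine fun ε : Fin (k + 1) → Bool => Fin.snoc ε (ε (Fin.last k)) := by
  intro n
  refine ⟨Fin.snoc (Fin.init (Fin.init n)) (Fin.init n (Fin.last k) + n (Fin.last (k + 1))), 0,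
    fun ε => ?_⟩
  rw [dotP_snoc, dotP_eq_init (Fin.init n), dotP_snoc_left]
  split_ifs <;> ring

theorem IsCubeAffine.snoc_last {φ : (Fin A → Bool) → (Fin B → Bool)} (hφ : IsCubeAffine φ) :
    IsCubeAffine fun ε : Fin (A + 1) → Bool => Fin.snoc (φ (Fin.init ε)) (ε (Fin.last A)) := by
  intro n
  obtain ⟨n', a, h⟩ := hφ (Fin.init n)
  exact ⟨Fin.snoc n' (n (Fin.last B)), a, fun ε => by rw [dotP_snoc, h, dotP_snoc_left]; ring⟩

variable {X : Type*} [TopologicalSpace X] {T : X ≃ₜ X}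

theorem comp_mem_cubeQ {φ : (Fin A → Bool) → (Fin B → Bool)} (hφ : IsCubeAffine φ)
    {z : Cube X B} (hz : z ∈ cubeQ X T B) : z ∘ φ ∈ cubeQ X T A := by
  refine MapsTo.closure ?_ (Pi.continuous_precomp φ) hz
  rintro - ⟨x, n, rfl⟩
  obtain ⟨n', a, h⟩ := hφ n
  exact ⟨(T.toEquiv ^ a) x, n', funext fun ε => by simp [h, Equiv.Perm.zpow_add_apply]⟩

end Reindexing

section Join

variable {X : Type*} {k : ℕ}

def cubeJoin (a b : Cube X k) : Cube X (k + 1) :=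
  fun ε => if ε (Fin.last k) then b (Fin.init ε) else a (Fin.init ε)

@[simp]
theorem cubeJoin_snoc (a b : Cube X k) (ε : Fin k → Bool) (c : Bool) :
    cubeJoin a b (Fin.snoc ε c) = if c then b ε else a ε := by
  simp [cubeJoin]

theorem cubeJoin_faces (z : Cube X (k + 1)) :
    cubeJoin (fun ε => z (Fin.snoc ε false)) (fun ε => z (Fin.snoc ε true)) = z := by
  funext ε
  obtain ⟨ε, c, rfl⟩ : ∃ ε' c, ε = Fin.snoc ε' c := ⟨_, _, (Fin.snoc_init_self ε).symm⟩
  cases c <;> simp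

end Join

section Envelope

variable {X : Type*} [TopologicalSpace X] {T : X ≃ₜ X} {k : ℕ}

def cubeGroup (T : X ≃ₜ X) (k : ℕ) : Set (Cube X k → Cube X k) :=
  {g | ∃ (N : Fin k → ℤ) (m : ℤ), g = fun z ε => (T.toEquiv ^ (dotP N ε + m)) (z ε)}

def cubeEnvelope (T : X ≃ₜ X) (k : ℕ) : Set (Cube X k → Cube X k) :=
  closure (cubeGroup T k)

namespace cubeGroup

theorem id_mem : id ∈ cubeGroup T k :=
  ⟨0, 0, by funext z ε; simp [dotP]⟩

theorem comp_mem {g h : Cube X k → Cube X k} (hg : g ∈ cubeGroup T k) (hh : h ∈ cubeGroup T k) :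
    g ∘ h ∈ cubeGroup T k := by
  obtain ⟨N, m, rfl⟩ := hg
  obtain ⟨N', m', rfl⟩ := hh
  refine ⟨N + N', m + m', funext fun z => funext fun ε => ?_⟩
  simp only [comp_apply, ← Equiv.Perm.zpow_add_apply, dotP_add, add_add_add_comm]

theorem continuous_of_mem {g : Cube X k → Cube X k} (hg : g ∈ cubeGroup T k) : Continuous g := by
  obtain ⟨N, m, rfl⟩ := hg
  exact continuous_pi fun ε => (T.continuous_toEquiv_zpow _).comp (continuous_apply ε)

theorem mapsTo_cubeQ {g : Cube X k → Cube X k} (hg : g ∈ cubeGroup T k) :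
    MapsTo g (cubeQ X T k) (cubeQ X T k) := by
  refine MapsTo.closure ?_ (continuous_of_mem hg)
  rintro - ⟨x, n, rfl⟩
  obtain ⟨N, m, rfl⟩ := hg
  refine ⟨(T.toEquiv ^ m) x, N + n, funext fun ε => ?_⟩
  simp only [← Equiv.Perm.zpow_add_apply, dotP_add, add_right_comm]

end cubeGroup

namespace cubeEnvelope

theorem id_mem : id ∈ cubeEnvelope T k :=
  subset_closure cubeGroup.id_mem

theorem comp_mem {p q : Cube X k → Cube X k} (hp : p ∈ cubeEnvelope T k)
    (hq : q ∈ cubeEnvelope T k) : p ∘ q ∈ cubeEnvelope T k := by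
  have hG : MapsTo (· ∘ q) (cubeGroup T k) (cubeEnvelope T k) := fun g hg =>
    MapsTo.closure (fun h hh => cubeGroup.comp_mem hg hh)
      (Pi.continuous_postcomp (cubeGroup.continuous_of_mem hg)) hq
  exact hG.closure_left (Pi.continuous_precomp q) isClosed_closure hp

theorem mapsTo_cubeQ {p : Cube X k → Cube X k} (hp : p ∈ cubeEnvelope T k) :
    MapsTo p (cubeQ X T k) (cubeQ X T k) := fun z hz =>
  MapsTo.closure_left (fun _ hg => cubeGroup.mapsTo_cubeQ hg hz) (continuous_apply z)
    isClosed_closure hp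

theorem apply_eq_of_eq [T2Space X] {p : Cube X k → Cube X k} (hp : p ∈ cubeEnvelope T k)
    {z z' : Cube X k} {ε : Fin k → Bool} (h : z ε = z' ε) : p z ε = p z' ε := by
  show p ∈ {f : Cube X k → Cube X k | f z ε = f z' ε}
  refine closure_minimal ?_ (isClosed_eq (by fun_prop) (by fun_prop)) hp
  rintro - ⟨N, m, rfl⟩
  simp [h]

theorem isCompact [CompactSpace X] : IsCompact (cubeEnvelope T k) :=
  isClosed_closure.isCompact

theorem exists_apply_const_eq [T2Space X] [CompactSpace X]
    (hmin : ∀ x : X, Dense (range fun n : ℤ => (T.toEquiv ^ n) x)) (x₀ : X) {z : Cube X k}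
    (hz : z ∈ cubeQ X T k) : ∃ p ∈ cubeEnvelope T k, p (fun _ => x₀) = z := by
  have hclosed : IsClosed ((fun p : Cube X k → Cube X k => p fun _ => x₀) '' cubeEnvelope T k) :=
    (isCompact.image (continuous_apply _)).isClosed
  refine closure_minimal ?_ hclosed hz
  rintro - ⟨x, n, rfl⟩
  refine MapsTo.closure_left (f := fun y ε => (T.toEquiv ^ dotP n ε) y) ?_
    (continuous_pi fun ε => T.continuous_toEquiv_zpow _) hclosed (hmin x₀ x)
  rintro - ⟨m, rfl⟩
  exact ⟨_, subset_closure ⟨n, m, rfl⟩, funext fun ε => Equiv.Perm.zpow_add_apply _ _ _ _⟩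

end cubeEnvelope

end Envelope

section Distal

variable {X : Type*} [MetricSpace X] {T : X ≃ₜ X} {k : ℕ}

def IsDistal (T : X ≃ₜ X) : Prop :=
  ∀ x y : X, x ≠ y → ∃ δ > 0, ∀ n : ℤ, δ ≤ dist ((T.toEquiv ^ n) x) ((T.toEquiv ^ n) y)

namespace cubeEnvelope

theorem exists_dist_zpow_lt_of_apply_eq {p : Cube X k → Cube X k} (hp : p ∈ cubeEnvelope T k)
    {z z' : Cube X k} {ε : Fin k → Bool} (h : p z ε = p z' ε) {δ : ℝ} (hδ : 0 < δ) :
    ∃ n : ℤ, dist ((T.toEquiv ^ n) (z ε)) ((T.toEquiv ^ n) (z' ε)) < δ := by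
  have hcont : Continuous fun f : Cube X k → Cube X k => (f z ε, f z' ε) := by fun_prop
  obtain ⟨-, ⟨-, ⟨N, m, rfl⟩, rfl⟩, hclose⟩ := Metric.mem_closure_iff.1
    (image_closure_subset_closure_image hcont ⟨p, hp, rfl⟩) (δ / 2) (half_pos hδ)
  set n := dotP N ε + m
  obtain ⟨hz, hz'⟩ : dist (p z' ε) ((T.toEquiv ^ n) (z ε)) < δ / 2 ∧
      dist (p z' ε) ((T.toEquiv ^ n) (z' ε)) < δ / 2 := by
    simpa only [Prod.dist_eq, max_lt_iff, h] using hclose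
  exact ⟨n, by
    linarith [dist_triangle_left ((T.toEquiv ^ n) (z ε)) ((T.toEquiv ^ n) (z' ε)) (p z' ε)]⟩

theorem injective (hT : IsDistal T) {p : Cube X k → Cube X k} (hp : p ∈ cubeEnvelope T k) :
    Injective p := by
  intro z z' h
  funext ε
  by_contra hne
  obtain ⟨δ, hδ, hsep⟩ := hT _ _ hne
  obtain ⟨n, hn⟩ := exists_dist_zpow_lt_of_apply_eq hp (congrFun h ε) hδ
  exact (hsep n).not_gt hn

theorem exists_inverse [CompactSpace X] (hT : IsDistal T) {p : Cube X k → Cube X k}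
    (hp : p ∈ cubeEnvelope T k) :
    ∃ q ∈ cubeEnvelope T k, LeftInverse q p ∧ RightInverse q p := by
  let _ : Semigroup (Cube X k → Cube X k) := { mul := (· ∘ ·), mul_assoc := fun _ _ _ => rfl }
  obtain ⟨-, ⟨q, hq, rfl⟩, hidem⟩ := exists_idempotent_in_compact_subsemigroup
    (fun r => Pi.continuous_precomp r) ((· ∘ p) '' cubeEnvelope T k) ⟨_, _, id_mem, rfl⟩
    (isCompact.image (Pi.continuous_precomp p))
    (by rintro - ⟨f, hf, rfl⟩ - ⟨g, hg, rfl⟩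
        exact ⟨f ∘ p ∘ g, comp_mem hf (comp_mem hp hg), rfl⟩)
  have hqp : LeftInverse q p := fun z => injective hT (comp_mem hq hp) (congrFun hidem z)
  exact ⟨q, hq, hqp, hqp.rightInverse_of_injective (injective hT hq)⟩

end cubeEnvelope

end Distal

section Faces

variable {X : Type*} [MetricSpace X] [CompactSpace X] {T : X ≃ₜ X} {k : ℕ}

theorem cubeJoin_mem_cubeQ_of_common_face
    (hmin : ∀ x : X, Dense (range fun n : ℤ => (T.toEquiv ^ n) x)) (hT : IsDistal T)
    {a b w : Cube X k} (ha : cubeJoin a w ∈ cubeQ X T (k + 1))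
    (hb : cubeJoin b w ∈ cubeQ X T (k + 1)) : cubeJoin a b ∈ cubeQ X T (k + 1) := by
  -- In coordinates `(ε, s, t)` of `Q^[k+2]`: `U = (b, w)(ε, t)`, `Y = (a, w)(ε, s)` and
  -- `M = Q Y (ε, s, s)`; `U` and `Y` agree at `s = t = 1`, so `M` is constant at `s = 1`.
  set U : Cube X (k + 2) :=
    cubeJoin b w ∘ fun ε => Fin.snoc (Fin.init (Fin.init ε)) (ε (Fin.last (k + 1)))
  set Y : Cube X (k + 2) := cubeJoin a w ∘ fun ε => Fin.init ε
  have hY : Y ∈ cubeQ X T (k + 2) := comp_mem_cubeQ isCubeAffine_init ha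
  set x₀ := a (vertex0 k)
  obtain ⟨P, hP, hPU⟩ : ∃ P ∈ cubeEnvelope T (k + 2), P (fun _ => x₀) = U :=
    cubeEnvelope.exists_apply_const_eq hmin x₀ (comp_mem_cubeQ isCubeAffine_init.snoc_last hb)
  obtain ⟨Q, hQ, hQP, hPQ⟩ := cubeEnvelope.exists_inverse hT hP
  set M : Cube X (k + 2) :=
    (Q Y ∘ fun ε => Fin.snoc ε (ε (Fin.last k))) ∘ fun ε => Fin.init ε
  have hM : M ∈ cubeQ X T (k + 2) := comp_mem_cubeQ isCubeAffine_init
    (comp_mem_cubeQ isCubeAffine_snoc_self_last (cubeEnvelope.mapsTo_cubeQ hQ hY))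
  have hM_upper (ε : Fin k → Bool) (t : Bool) :
      M (Fin.snoc (Fin.snoc ε true) t) = x₀ := by
    have hUY : U (Fin.snoc (Fin.snoc ε true) true) = Y (Fin.snoc (Fin.snoc ε true) true) := by
      simp [U, Y]
    simp only [M, comp_apply, Fin.init_snoc, Fin.snoc_last]
    rw [← hPU] at hUY
    rw [← cubeEnvelope.apply_eq_of_eq hQ hUY, hQP]
  have hPM_upper (ε : Fin k → Bool) : P M (Fin.snoc (Fin.snoc ε true) false) = b ε := by
    rw [cubeEnvelope.apply_eq_of_eq hP (z' := fun _ => x₀) (hM_upper ε false), hPU]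
    simp [U]
  have hPM_lower (ε : Fin k → Bool) : P M (Fin.snoc (Fin.snoc ε false) false) = a ε := by
    have hMY :
        M (Fin.snoc (Fin.snoc ε false) false) = Q Y (Fin.snoc (Fin.snoc ε false) false) := by
      simp [M]
    rw [cubeEnvelope.apply_eq_of_eq hP hMY, hPQ]
    simp [Y]
  have hab : cubeJoin a b = P M ∘ fun ε => Fin.snoc ε false := by
    funext ε
    obtain ⟨ε, c, rfl⟩ : ∃ ε' c, ε = Fin.snoc ε' c := ⟨_, _, (Fin.snoc_init_self ε).symm⟩
    cases c <;> simp [hPM_upper, hPM_lower]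
  rw [hab]
  exact comp_mem_cubeQ (isCubeAffine_snoc false) (cubeEnvelope.mapsTo_cubeQ hP hM)

end Faces

theorem mem_RP_of_cubeJoin_mem {X : Type*} [MetricSpace X] {T : X ≃ₜ X} {d : ℕ} {a b : Cube X d}
    (h : cubeJoin a b ∈ cubeQ X T (d + 1)) (hab : ∀ ε, ε ≠ vertex0 d → a ε = b ε) :
    (a (vertex0 d), b (vertex0 d)) ∈ RP X T d := by
  intro δ hδ
  obtain ⟨-, ⟨x, n, rfl⟩, hclose⟩ := Metric.mem_closure_iff.1 h (δ / 2) (half_pos hδ)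
  have happrox (ε : Fin d → Bool) (c : Bool) :
      dist (if c then b ε else a ε)
        ((T.toEquiv ^ (dotP (Fin.init n) ε + if c then n (Fin.last d) else 0)) x) < δ / 2 := by
    simpa [dotP_snoc] using (dist_pi_lt_iff (half_pos hδ)).1 hclose (Fin.snoc ε c)
  refine ⟨x, (T.toEquiv ^ n (Fin.last d)) x, Fin.init n, ?_, ?_, fun ε hε => ?_⟩
  · simpa using (happrox (vertex0 d) false).trans (half_lt_self hδ)
  · simpa using (happrox (vertex0 d) true).trans (half_lt_self hδ)
  · have hlower := happrox ε false
    have hupper := happrox ε true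
    simp only [Bool.false_eq_true, if_false, if_true, add_zero, ← hab ε hε,
      Equiv.Perm.zpow_add_apply] at hlower hupper
    linarith [dist_triangle_left ((T.toEquiv ^ dotP (Fin.init n) ε) x)
      ((T.toEquiv ^ dotP (Fin.init n) ε) ((T.toEquiv ^ n (Fin.last d)) x)) (a ε)]

theorem RP_of_cubeQ_agree_general
    {X : Type*} [MetricSpace X] [CompactSpace X] (T : X ≃ₜ X) (d : ℕ)
    (hmin : ∀ x : X, Dense (Set.range fun n : ℤ => (T.toEquiv ^ n) x))
    (hdistal : ∀ x y : X, x ≠ y →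
      ∃ δ > 0, ∀ n : ℤ, δ ≤ dist ((T.toEquiv ^ n) x) ((T.toEquiv ^ n) y))
    (u v : (Fin (d + 1) → Bool) → X)
    (hu : u ∈ cubeQ X T (d + 1)) (hv : v ∈ cubeQ X T (d + 1))
    (hagree : ∀ ε : Fin (d + 1) → Bool, ε ≠ vertex0 (d + 1) → u ε = v ε) :
    (u (vertex0 (d + 1)), v (vertex0 (d + 1))) ∈ RP X T d := by
  have hupper : (fun ε => v (Fin.snoc ε true)) = fun ε => u (Fin.snoc ε true) :=
    funext fun ε => (hagree _ (by simp [snoc_eq_vertex0_iff])).symm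
  have hjoin := cubeJoin_mem_cubeQ_of_common_face hmin hdistal
    (a := fun ε => u (Fin.snoc ε false)) (b := fun ε => v (Fin.snoc ε false))
    (by rwa [cubeJoin_faces]) (by rwa [← hupper, cubeJoin_faces])
  have hvertex : vertex0 (d + 1) = Fin.snoc (vertex0 d) false :=
    ((snoc_eq_vertex0_iff _ _).2 ⟨rfl, rfl⟩).symm
  rw [hvertex]
  exact mem_RP_of_cubeJoin_mem hjoin fun ε hε =>
    hagree _ (by simpa [snoc_eq_vertex0_iff] using hε)

/-- In a minimal distal system, two parallelepipeds agreeing in all coordinates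
`ε ≠ ∅` have regionally proximal first coordinates. -/
theorem RP_of_cubeQ_agree
    {X : Type*} [MetricSpace X] [CompactSpace X] (T : X ≃ₜ X) (d : ℕ) (hd : 1 ≤ d)
    (hmin : ∀ x : X, Dense (Set.range fun n : ℤ => (T.toEquiv ^ n) x))
    (hdistal : ∀ x y : X, x ≠ y →
      ∃ δ > 0, ∀ n : ℤ, δ ≤ dist ((T.toEquiv ^ n) x) ((T.toEquiv ^ n) y))
    (u v : (Fin (d + 1) → Bool) → X)
    (hu : u ∈ cubeQ X T (d + 1)) (hv : v ∈ cubeQ X T (d + 1))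
    (hagree : ∀ ε : Fin (d + 1) → Bool, ε ≠ vertex0 (d + 1) → u ε = v ε) :
    (u (vertex0 (d + 1)), v (vertex0 (d + 1))) ∈ RP X T d :=
  RP_of_cubeQ_agree_general T d hmin hdistal u v hu hv hagree
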